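/- arXiv:1801.10401 — 2 statements merged into one kernel-verified Lean document; each statement's English description precedes it below -/
import Mathlib

section
/- Let φ be a 3-CNF formula with n variables and m clauses in which every clause has exactly three distinct literals, and let D(φ) be the DAG constructed from φ by the variable-gadget/clause-gadget construction. Then D(φ) has arc-deletion distance to a funnel at most 2m + n if and only if φ is satisfiable. -/
variable {V : Type*} [Fintype V] [DecidableEq V]

/-- Arc adjacency of a digraph given by its finite arc set. -/
def ArcAdj (A : Finset (V × V)) : V → V → Prop := fun u v => (u, v) ∈ A

/-- A digraph is a DAG if it contains no directed cycle. -/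
def IsDAG (A : Finset (V × V)) : Prop := ∀ v : V, ¬ Relation.TransGen (ArcAdj A) v v

/-- Indegree of a vertex. -/
def inDeg (A : Finset (V × V)) (v : V) : ℕ := (A.filter fun e => e.2 = v).card

/-- Outdegree of a vertex. -/
def outDeg (A : Finset (V × V)) (v : V) : ℕ := (A.filter fun e => e.1 = v).card

/-- A source is a vertex of indegree 0. -/
def IsSource (A : Finset (V × V)) (v : V) : Prop := inDeg A v = 0

/-- A sink is a vertex of outdegree 0. -/
def IsSink (A : Finset (V × V)) (v : V) : Prop := outDeg A v = 0

/-- The arcs (consecutive pairs of vertices) of a path given as a list of vertices. -/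
def arcsOf (p : List V) : List (V × V) := p.zip p.tail

/-- A source-sink path: a directed path (with at least one arc) starting at a
source and ending at a sink. -/
def IsSourceSinkPath (A : Finset (V × V)) (p : List V) : Prop :=
  2 ≤ p.length ∧ List.Chain' (ArcAdj A) p ∧ p.Nodup ∧
  (∃ s, p.head? = some s ∧ IsSource A s) ∧
  (∃ t, p.getLast? = some t ∧ IsSink A t)

/-- An arc is private if exactly one source-sink path contains it. -/
def IsPrivate (A : Finset (V × V)) (e : V × V) : Prop :=
  ∃! p : List V, IsSourceSinkPath A p ∧ e ∈ arcsOf p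

/-- A funnel: every source-sink path contains at least one private arc. -/
def IsFunnel (A : Finset (V × V)) : Prop :=
  ∀ p : List V, IsSourceSinkPath A p → ∃ e ∈ arcsOf p, IsPrivate A e

/-- The arc-deletion distance to a funnel: the minimum number of arcs whose
deletion turns the digraph into a funnel. -/
noncomputable def funnelDist (A : Finset (V × V)) : ℕ :=
  sInf {k | ∃ B ⊆ A, B.card = k ∧ IsFunnel (A \ B)}

/-- Vertices of the reduction DAG `D(φ)`: for each variable `x : Fin n` the six
vertices `x_0, x_t, x_f, x_1, x_2, x_3` (encoded as `(x, 0), …, (x, 5)`), and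
for each clause `c : Fin m` the five vertices `c_0, …, c_4`
(encoded as `(c, 0), …, (c, 4)`). -/
abbrev RedV (n m : ℕ) := (Fin n × Fin 6) ⊕ (Fin m × Fin 5)

/-- Arcs of the reduction DAG `D(φ)`, where a clause `φ c` consists of the three
distinct literals `φ c 0, φ c 1, φ c 2` and a literal is a pair (variable, sign):
`(x_t, x_0)`, `(x_f, x_0)`, `(x_0, x_i)` for `i = 1, 2, 3`; `(c_i, c_0)` for
`i = 1, …, 4`; and `(c_0, x_t)` if `x` occurs positively in clause `c`,
`(c_0, x_f)` if `x` occurs negatively in `c`. -/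
def RedAdj (n m : ℕ) (φ : Fin m → Fin 3 → Fin n × Bool) :
    RedV n m → RedV n m → Prop := fun a b =>
  (∃ x : Fin n, (a = Sum.inl (x, 1) ∨ a = Sum.inl (x, 2)) ∧ b = Sum.inl (x, 0)) ∨
  (∃ x : Fin n, a = Sum.inl (x, 0) ∧
      (b = Sum.inl (x, 3) ∨ b = Sum.inl (x, 4) ∨ b = Sum.inl (x, 5))) ∨
  (∃ (c : Fin m) (i : Fin 5), i ≠ 0 ∧ a = Sum.inr (c, i) ∧ b = Sum.inr (c, 0)) ∨
  (∃ (c : Fin m) (x : Fin n) (j : Fin 3), a = Sum.inr (c, 0) ∧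
      ((φ c j = (x, true) ∧ b = Sum.inl (x, 1)) ∨
       (φ c j = (x, false) ∧ b = Sum.inl (x, 2))))

open Classical in
/-- The arc set of the reduction DAG `D(φ)`. -/
noncomputable def redArcs (n m : ℕ) (φ : Fin m → Fin 3 → Fin n × Bool) :
    Finset (RedV n m × RedV n m) :=
  Finset.univ.filter fun e => RedAdj n m φ e.1 e.2

/-!
A DAG is a funnel exactly when no vertex of in-degree at least two reaches a vertex of
out-degree at least two. If a merge `v` reaches a fork `w`, a source-sink path through both can be
rerouted before `v` or after `w`, so each of its arcs lies on a second source-sink path.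
Otherwise, cutting a source-sink path just before its first merge (or before its last vertex)
leaves a prefix of vertices of in-degree at most one and a suffix of vertices of out-degree at
most one, so the arc at the cut determines the whole path.

In `D(φ)` each clause centre `c_0` (in-degree 4, out-degree 3) must lose two incident arcs and
each variable centre `x_0` (in-degree 2, out-degree 3) one. No arc joins two centres, so with
`2m + n` deletions `c_0` loses exactly two out-arcs and `x_0` exactly one in-arc. The deleted
in-arc of `x_0` is the truth value of `x`, and the literal kept by `c_0` must be true, since
otherwise `c_0` would reach the fork `x_0`. Conversely, deleting the arc from the true literal of
each `x` into `x_0`, and the arcs from `c_0` to the two literals of `c` other than one chosen true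
literal, leaves a funnel.
-/

open Finset Relation

section

omit [Fintype V] [DecidableEq V]

theorem Finset.filter_sdiff_distrib {α : Type*} [DecidableEq α] (s t : Finset α) (p : α → Prop)
    [DecidablePred p] : (s \ t).filter p = s.filter p \ t.filter p := by
  ext; simp only [mem_filter, mem_sdiff]; tauto

theorem arcsOf_cons_cons (a b : V) (l : List V) :
    arcsOf (a :: b :: l) = (a, b) :: arcsOf (b :: l) := rfl

theorem mem_arcsOf_iff {p : List V} {a b : V} :
    (a, b) ∈ arcsOf p ↔ ∃ l₁ l₂, p = l₁ ++ a :: b :: l₂ := by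
  induction p with
  | nil => simp [arcsOf]
  | cons x t ih =>
    cases t with
    | nil =>
      refine iff_of_false (by simp [arcsOf]) ?_
      rintro ⟨l₁, l₂, h⟩
      have := congrArg List.length h
      simp only [List.length_cons, List.length_nil, zero_add, List.length_append] at this
      omega
    | cons y t =>
      rw [arcsOf_cons_cons, List.mem_cons, ih, Prod.mk.injEq]
      constructor
      · rintro (⟨rfl, rfl⟩ | ⟨l₁, l₂, h⟩)
        · exact ⟨[], t, rfl⟩
        · exact ⟨x :: l₁, l₂, by rw [h, List.cons_append]⟩
      · rintro ⟨_ | ⟨z, l₁⟩, l₂, h⟩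
        · simp_all
        · exact Or.inr ⟨l₁, l₂, (List.cons.inj h).2⟩

theorem arcsOf_append_cons (l₁ l₂ : List V) (w : V) :
    arcsOf (l₁ ++ w :: l₂) = arcsOf (l₁ ++ [w]) ++ arcsOf (w :: l₂) := by
  induction l₁ with
  | nil => rfl
  | cons a t ih =>
    cases t with
    | nil => rfl
    | cons b t => exact congrArg ((a, b) :: ·) ih

theorem isChain_tail_unique {α : Type*} {r : α → α → Prop} {a : α} {l l' : List α}
    (hl : (a :: l).IsChain r) (hl' : (a :: l').IsChain r)
    (hfun : ∀ x ∈ a :: l, ∀ y z, r x y → r x z → y = z)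
    (hend : ∀ x ∈ (a :: l).getLast?, ∀ y, ¬ r x y)
    (hend' : ∀ x ∈ (a :: l').getLast?, ∀ y, ¬ r x y) : l = l' := by
  induction l generalizing a l' with
  | nil =>
    cases l' with
    | nil => rfl
    | cons b l' => exact absurd (List.isChain_cons_cons.1 hl').1 (hend a rfl b)
  | cons b t ih =>
    cases l' with
    | nil => exact absurd (List.isChain_cons_cons.1 hl).1 (hend' a rfl b)
    | cons b' t' =>
      rw [List.isChain_cons_cons] at hl hl'
      obtain rfl := hfun a List.mem_cons_self b' b hl'.1 hl.1
      rw [List.getLast?_cons_cons] at hend hend'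
      exact congrArg (b' :: ·) (ih hl.2 hl'.2 (fun x hx => hfun x (List.mem_cons_of_mem a hx))
        hend hend')

variable {A B : Finset (V × V)}

theorem isDAG_of_lt (f : V → ℕ) (hf : ∀ e ∈ A, f e.1 < f e.2) : IsDAG A := by
  have hlt {a b : V} (h : TransGen (ArcAdj A) a b) : f a < f b := by
    induction h with
    | single h => exact hf _ h
    | tail _ h ih => exact ih.trans (hf _ h)
  exact fun v hv => (hlt hv).false

theorem IsDAG.mono (hA : IsDAG A) (hB : B ⊆ A) : IsDAG B :=
  fun v hv => hA v (TransGen.mono (fun _ _ h => hB h) _ _ hv)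

theorem IsDAG.nodup (hA : IsDAG A) {p : List V} (hp : p.IsChain (ArcAdj A)) : p.Nodup := by
  refine (List.isChain_iff_pairwise.1 (hp.imp fun _ _ => TransGen.single)).imp ?_
  rintro a _ h rfl
  exact hA a h

theorem wellFounded_of_forall_not_transGen {α : Type*} [Finite α] {r : α → α → Prop}
    (h : ∀ a, ¬ TransGen r a a) : WellFounded r :=
  haveI : Std.Irrefl (TransGen r) := ⟨h⟩
  Subrelation.wf TransGen.single (Finite.wellFounded_of_trans_of_irrefl _)

end

section

omit [Fintype V]

variable {A B : Finset (V × V)}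

theorem isSink_iff {v : V} : IsSink A v ↔ ∀ w, (v, w) ∉ A := by
  simp only [IsSink, outDeg, card_eq_zero, filter_eq_empty_iff, Prod.forall]
  exact ⟨fun h w hw => h v w hw rfl, fun h a b hab hav => h b (hav ▸ hab)⟩

theorem isSource_iff {v : V} : IsSource A v ↔ ∀ u, (u, v) ∉ A := by
  simp only [IsSource, inDeg, card_eq_zero, filter_eq_empty_iff, Prod.forall]
  exact ⟨fun h u hu => h u v hu rfl, fun h a b hab hbv => h a (hbv ▸ hab)⟩

theorem IsSink.eq_of_reflTransGen {v w : V} (hv : IsSink A v)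
    (h : ReflTransGen (ArcAdj A) v w) : w = v := by
  rcases h.cases_head with rfl | ⟨u, hu, -⟩
  · rfl
  · exact absurd hu (isSink_iff.1 hv u)

theorem one_lt_inDeg_iff {v : V} :
    1 < inDeg A v ↔ ∃ u₁ u₂, u₁ ≠ u₂ ∧ (u₁, v) ∈ A ∧ (u₂, v) ∈ A := by
  rw [inDeg, Finset.one_lt_card_iff]
  constructor
  · rintro ⟨⟨u₁, v₁⟩, ⟨u₂, v₂⟩, h₁, h₂, hne⟩
    simp only [mem_filter] at h₁ h₂
    obtain ⟨h₁, rfl⟩ := h₁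
    obtain ⟨h₂, rfl⟩ := h₂
    exact ⟨u₁, u₂, fun h => hne (h ▸ rfl), h₁, h₂⟩
  · rintro ⟨u₁, u₂, hne, h₁, h₂⟩
    exact ⟨(u₁, v), (u₂, v), by simpa, by simpa, by simpa⟩

theorem one_lt_outDeg_iff {v : V} :
    1 < outDeg A v ↔ ∃ w₁ w₂, w₁ ≠ w₂ ∧ (v, w₁) ∈ A ∧ (v, w₂) ∈ A := by
  rw [outDeg, Finset.one_lt_card_iff]
  constructor
  · rintro ⟨⟨v₁, w₁⟩, ⟨v₂, w₂⟩, h₁, h₂, hne⟩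
    simp only [mem_filter] at h₁ h₂
    obtain ⟨h₁, rfl⟩ := h₁
    obtain ⟨h₂, rfl⟩ := h₂
    exact ⟨w₁, w₂, fun h => hne (h ▸ rfl), h₁, h₂⟩
  · rintro ⟨w₁, w₂, hne, h₁, h₂⟩
    exact ⟨(v, w₁), (v, w₂), by simpa, by simpa, by simpa⟩

theorem inDeg_sdiff (hB : B ⊆ A) (v : V) : inDeg (A \ B) v = inDeg A v - inDeg B v := by
  rw [inDeg, filter_sdiff_distrib, card_sdiff_of_subset (filter_subset_filter _ hB)]; rfl

theorem outDeg_sdiff (hB : B ⊆ A) (v : V) : outDeg (A \ B) v = outDeg A v - outDeg B v := by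
  rw [outDeg, filter_sdiff_distrib, card_sdiff_of_subset (filter_subset_filter _ hB)]; rfl

theorem inDeg_eq_card {s : Finset V} {v : V} (hs : ∀ u, u ∈ s ↔ (u, v) ∈ A) :
    inDeg A v = #s := by
  refine card_nbij' Prod.fst (·, v) ?_ (fun u hu => by simpa [hs] using hu) ?_ (fun _ _ => rfl)
  · rintro ⟨u, w⟩ h
    simp only [coe_filter, Set.mem_ofPred_eq, mem_coe, hs] at h ⊢
    exact h.2 ▸ h.1
  · rintro ⟨u, w⟩ h
    simp only [coe_filter, Set.mem_ofPred_eq] at h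
    simp [h.2]

theorem outDeg_eq_card {s : Finset V} {v : V} (hs : ∀ w, w ∈ s ↔ (v, w) ∈ A) :
    outDeg A v = #s := by
  refine card_nbij' Prod.snd (v, ·) ?_ (fun w hw => by simpa [hs] using hw) ?_ (fun _ _ => rfl)
  · rintro ⟨u, w⟩ h
    simp only [coe_filter, Set.mem_ofPred_eq, mem_coe, hs] at h ⊢
    exact h.2 ▸ h.1
  · rintro ⟨u, w⟩ h
    simp only [coe_filter, Set.mem_ofPred_eq] at h
    simp [h.2]

theorem sum_inDeg_add_outDeg_le_card (C : Finset V) (hC : ∀ e ∈ B, e.1 ∈ C → e.2 ∉ C) :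
    ∑ v ∈ C, (inDeg B v + outDeg B v) ≤ #B := by
  calc ∑ v ∈ C, (inDeg B v + outDeg B v)
      = ∑ e ∈ B, ((if e.2 ∈ C then 1 else 0) + (if e.1 ∈ C then 1 else 0)) := by
        simp only [inDeg, outDeg, card_filter, ← sum_add_distrib]
        rw [sum_comm]
        simp [sum_add_distrib, sum_ite_eq]
    _ ≤ ∑ _e ∈ B, 1 := sum_le_sum fun e he => by have := hC e he; split_ifs <;> simp_all
    _ = #B := (card_eq_sum_ones B).symm

theorem inDeg_le_one_iff {v : V} :
    inDeg A v ≤ 1 ↔ ∀ u₁ u₂, (u₁, v) ∈ A → (u₂, v) ∈ A → u₁ = u₂ := by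
  simp only [← not_lt, one_lt_inDeg_iff, not_exists]
  exact forall₂_congr fun _ _ => by tauto

theorem outDeg_le_one_iff {v : V} :
    outDeg A v ≤ 1 ↔ ∀ w₁ w₂, (v, w₁) ∈ A → (v, w₂) ∈ A → w₁ = w₂ := by
  simp only [← not_lt, one_lt_outDeg_iff, not_exists]
  exact forall₂_congr fun _ _ => by tauto

theorem isFunnel_empty : IsFunnel (∅ : Finset (V × V)) := by
  rintro (_ | ⟨a, _ | ⟨b, p⟩⟩) ⟨hlen, hc, -⟩
  · simp at hlen
  · simp at hlen
  · exact absurd (List.isChain_cons_cons.1 hc).1 (notMem_empty _)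

theorem funnelDist_le_iff {k : ℕ} :
    funnelDist A ≤ k ↔ ∃ B ⊆ A, #B ≤ k ∧ IsFunnel (A \ B) := by
  set S := {k | ∃ B ⊆ A, #B = k ∧ IsFunnel (A \ B)}
  refine ⟨fun h => ?_,
    fun ⟨B, hB, hcard, hF⟩ => (Nat.sInf_le (s := S) ⟨B, hB, rfl, hF⟩).trans hcard⟩
  have hS : S.Nonempty := ⟨#A, A, subset_rfl, rfl, by rw [sdiff_self]; exact isFunnel_empty⟩
  obtain ⟨B, hB, hcard, hF⟩ := Nat.sInf_mem hS
  exact ⟨B, hB, hcard.trans_le h, hF⟩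

theorem isPrivate_of_split {l₁ l₂ : List V} {a b : V}
    (hp : IsSourceSinkPath A (l₁ ++ a :: b :: l₂))
    (hin : ∀ x ∈ l₁ ++ [a], inDeg A x ≤ 1) (hout : ∀ x ∈ b :: l₂, outDeg A x ≤ 1) :
    IsPrivate A (a, b) := by
  refine ⟨_, ⟨hp, mem_arcsOf_iff.2 ⟨l₁, l₂, rfl⟩⟩, ?_⟩
  rintro q ⟨hq, hqab⟩
  obtain ⟨l₁', l₂', rfl⟩ := mem_arcsOf_iff.1 hqab
  obtain ⟨-, (hqc : List.IsChain _ _), -, ⟨s', hs', hsrc'⟩, ⟨t', ht', hsink'⟩⟩ := hq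
  obtain ⟨-, (hpc : List.IsChain _ _), -, ⟨s, hs, hsrc⟩, ⟨t, ht, hsink⟩⟩ := hp
  rw [List.isChain_append_cons_cons] at hqc hpc
  have hlast {l₁ l₂ : List V} {z : V} (h : (l₁ ++ a :: b :: l₂).getLast? = some z) :
      (b :: l₂).getLast? = some z := by
    rwa [List.getLast?_append_of_ne_nil _ (List.cons_ne_nil _ _), List.getLast?_cons_cons] at h
  have hfirst {l₁ l₂ : List V} {z : V} (h : (l₁ ++ a :: b :: l₂).head? = some z) :
      (a :: l₁.reverse).getLast? = some z := by
    simpa [List.getLast?_cons, List.head?_append] using h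
  have hsuffix : l₂ = l₂' := by
    refine isChain_tail_unique hpc.2.2 hqc.2.2 (fun x hx => outDeg_le_one_iff.1 (hout x hx))
      ?_ ?_
    · rw [hlast ht]; rintro x ⟨⟩; exact isSink_iff.1 hsink
    · rw [hlast ht']; rintro x ⟨⟩; exact isSink_iff.1 hsink'
  have hprefix : l₁.reverse = l₁'.reverse := by
    refine isChain_tail_unique (r := fun x y => ArcAdj A y x)
      (by simpa using List.isChain_reverse.2 hpc.1) (by simpa using List.isChain_reverse.2 hqc.1)
      (fun x hx y z hy hz => inDeg_le_one_iff.1 (hin x (by simpa [or_comm] using hx)) y z hy hz)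
      ?_ ?_
    · rw [hfirst hs]; rintro x ⟨⟩ y; exact isSource_iff.1 hsrc y
    · rw [hfirst hs']; rintro x ⟨⟩ y; exact isSource_iff.1 hsrc' y
  rw [hsuffix, List.reverse_inj.1 hprefix]

theorem exists_split_of_forall_outDeg_le_one
    (hfork : ∀ v w, 2 ≤ inDeg A v → ReflTransGen (ArcAdj A) v w → outDeg A w ≤ 1)
    {a b : V} {t : List V} (hc : (a :: b :: t).IsChain (ArcAdj A)) (ha : inDeg A a ≤ 1)
    (hsink : ∃ z, (a :: b :: t).getLast? = some z ∧ IsSink A z) :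
    ∃ l₁ a' b' l₂, a :: b :: t = l₁ ++ a' :: b' :: l₂ ∧
      (∀ x ∈ l₁ ++ [a'], inDeg A x ≤ 1) ∧ ∀ x ∈ b' :: l₂, outDeg A x ≤ 1 := by
  induction t generalizing a b with
  | nil =>
    obtain ⟨z, hz, hz'⟩ := hsink
    obtain rfl : b = z := by simpa using hz
    exact ⟨[], a, b, [], rfl, by simpa using ha, by simp [show outDeg A b = 0 from hz']⟩
  | cons c t ih =>
    rw [List.isChain_cons_cons] at hc
    by_cases hb : 2 ≤ inDeg A b
    · refine ⟨[], a, b, c :: t, rfl, by simpa using ha, fun x hx => hfork b x hb ?_⟩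
      exact hc.2.induction (ReflTransGen (ArcAdj A) b) _ (fun _ _ h hx => hx.tail h)
        (fun _ => .refl) x hx
    · obtain ⟨l₁, a', b', l₂, h, hin, hout⟩ := ih hc.2 (by omega) (by simpa using hsink)
      exact ⟨a :: l₁, a', b', l₂, by rw [h]; rfl, List.forall_mem_cons.2 ⟨ha, hin⟩, hout⟩

theorem isFunnel_of_forall_outDeg_le_one
    (hfork : ∀ v w, 2 ≤ inDeg A v → ReflTransGen (ArcAdj A) v w → outDeg A w ≤ 1) :
    IsFunnel A := by
  intro p hp
  obtain ⟨hlen, (hc : List.IsChain _ _), -, ⟨s, hs, hsrc⟩, hsink⟩ := id hp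
  match p, hlen, hs with
  | a :: b :: t, _, hs =>
    obtain rfl : a = s := by simpa using hs
    obtain ⟨l₁, a', b', l₂, h, hin, hout⟩ :=
      exists_split_of_forall_outDeg_le_one hfork hc (Eq.trans_le hsrc zero_le_one) hsink
    rw [h] at hp ⊢
    exact ⟨(a', b'), mem_arcsOf_iff.2 ⟨l₁, l₂, rfl⟩, isPrivate_of_split hp hin hout⟩

theorem not_isFunnel_of_crossing {X₁ X₂ Y₁ Y₂ : List V} {w : V} (hX : X₁ ≠ X₂) (hY : Y₁ ≠ Y₂)
    (h₁₁ : IsSourceSinkPath A (X₁ ++ w :: Y₁)) (h₁₂ : IsSourceSinkPath A (X₁ ++ w :: Y₂))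
    (h₂₁ : IsSourceSinkPath A (X₂ ++ w :: Y₁)) : ¬ IsFunnel A := by
  intro hF
  obtain ⟨e, he, hpriv⟩ := hF _ h₁₁
  have hshared {q} (hq : IsSourceSinkPath A q) (he' : e ∈ arcsOf q) : q = X₁ ++ w :: Y₁ :=
    hpriv.unique ⟨hq, he'⟩ ⟨h₁₁, he⟩
  rw [arcsOf_append_cons, List.mem_append] at he
  rcases he with he | he
  · have h : X₁ ++ w :: Y₂ = X₁ ++ w :: Y₁ :=
      hshared h₁₂ (by rw [arcsOf_append_cons]; exact List.mem_append_left _ he)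
    exact hY (by simpa using h.symm)
  · have h : X₂ ++ w :: Y₁ = X₁ ++ w :: Y₁ :=
      hshared h₂₁ (by rw [arcsOf_append_cons]; exact List.mem_append_right _ he)
    exact hX (by simpa using h.symm)

theorem IsDAG.exists_isChain_to_sink [Finite V] (hA : IsDAG A) (v : V) :
    ∃ T, (v :: T).IsChain (ArcAdj A) ∧ ∃ t, (v :: T).getLast? = some t ∧ IsSink A t := by
  have hwf : WellFounded (flip (ArcAdj A)) :=
    wellFounded_of_forall_not_transGen fun v h => hA v (transGen_swap.1 h)
  induction v using hwf.induction with
  | _ v ih =>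
  by_cases hv : IsSink A v
  · exact ⟨[], .singleton v, v, rfl, hv⟩
  · obtain ⟨w, hw⟩ : ∃ w, (v, w) ∈ A := by simpa [isSink_iff] using hv
    obtain ⟨T, hT, t, hlast, ht⟩ := ih w hw
    exact ⟨w :: T, hT.cons_cons hw, t, by simpa using hlast, ht⟩

theorem IsDAG.exists_isChain_from_source [Finite V] (hA : IsDAG A) (v : V) :
    ∃ S, (S ++ [v]).IsChain (ArcAdj A) ∧ ∃ s, (S ++ [v]).head? = some s ∧ IsSource A s := by
  induction v using (wellFounded_of_forall_not_transGen hA).induction with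
  | _ v ih =>
  by_cases hv : IsSource A v
  · exact ⟨[], .singleton v, v, rfl, hv⟩
  · obtain ⟨u, hu⟩ : ∃ u, (u, v) ∈ A := by simpa [isSource_iff] using hv
    obtain ⟨S, hS, s, hhead, hs⟩ := ih u hu
    exact ⟨S ++ [u], hS.append (.singleton v) (by simpa [ArcAdj] using hu), s,
      by simpa [List.head?_append] using hhead, hs⟩

theorem IsFunnel.outDeg_le_one_of_reflTransGen [Finite V] (hF : IsFunnel A) (hA : IsDAG A)
    {v w : V} (hv : 2 ≤ inDeg A v) (hvw : ReflTransGen (ArcAdj A) v w) : outDeg A w ≤ 1 := by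
  by_contra! hw
  obtain ⟨u₁, u₂, hu, hu₁, hu₂⟩ := one_lt_inDeg_iff.1 hv
  obtain ⟨t₁, t₂, ht, ht₁, ht₂⟩ := one_lt_outDeg_iff.1 hw
  obtain ⟨l, hl, hlc, hlv, hlw⟩ := List.exists_isChain_ne_nil_of_relationReflTransGen hvw
  have hN : l.dropLast ++ [w] = l := hlw ▸ List.dropLast_append_getLast hl
  have hpath {S : List V} {u t : V} {T : List V}
      (hS : (S ++ [u]).IsChain (ArcAdj A)) (hs : ∃ s, (S ++ [u]).head? = some s ∧ IsSource A s)
      (hu : (u, v) ∈ A) (ht : (w, t) ∈ A) (hT : (t :: T).IsChain (ArcAdj A))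
      (hz : ∃ z, (t :: T).getLast? = some z ∧ IsSink A z) :
      IsSourceSinkPath A ((S ++ u :: l.dropLast) ++ w :: t :: T) := by
    have hc : ((S ++ u :: l.dropLast) ++ w :: t :: T).IsChain (ArcAdj A) := by
      rw [List.isChain_split, List.append_assoc, List.cons_append, hN, List.isChain_split]
      exact ⟨⟨hS, hlc.cons_of_ne_nil hl (hlv ▸ hu)⟩, hT.cons_cons ht⟩
    refine ⟨by simp only [List.length_append, List.length_cons]; omega, hc, hA.nodup hc, by simpa [List.head?_append] using hs, ?_⟩
    rwa [List.getLast?_append_of_ne_nil _ (List.cons_ne_nil _ _), List.getLast?_cons_cons]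
  obtain ⟨S₁, hS₁, hs₁⟩ := hA.exists_isChain_from_source u₁
  obtain ⟨S₂, hS₂, hs₂⟩ := hA.exists_isChain_from_source u₂
  obtain ⟨T₁, hT₁, hz₁⟩ := hA.exists_isChain_to_sink t₁
  obtain ⟨T₂, hT₂, hz₂⟩ := hA.exists_isChain_to_sink t₂
  refine not_isFunnel_of_crossing ?_ ?_ (hpath hS₁ hs₁ hu₁ ht₁ hT₁ hz₁)
    (hpath hS₁ hs₁ hu₁ ht₂ hT₂ hz₂) (hpath hS₂ hs₂ hu₂ ht₁ hT₁ hz₁) hF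
  · intro h
    rw [List.append_cons S₁, List.append_cons S₂] at h
    simpa [hu] using congrArg List.getLast? (List.append_cancel_right h)
  · exact fun h => ht (List.head_eq_of_cons_eq h)

end

section

variable {n m : ℕ} {φ : Fin m → Fin 3 → Fin n × Bool}

def litVertex (ℓ : Fin n × Bool) : RedV n m := Sum.inl (ℓ.1, if ℓ.2 then 1 else 2)

theorem litVertex_injective : Function.Injective (litVertex : Fin n × Bool → RedV n m) := by
  rintro ⟨x, _ | _⟩ ⟨y, _ | _⟩ h <;> simp_all [litVertex]

theorem mem_redArcs {a b : RedV n m} : (a, b) ∈ redArcs n m φ ↔ RedAdj n m φ a b := by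
  simp [redArcs]

theorem redAdj_iff {a b : RedV n m} :
    RedAdj n m φ a b ↔
      (∃ ℓ : Fin n × Bool, a = litVertex ℓ ∧ b = Sum.inl (ℓ.1, 0)) ∨
      (∃ x k, 3 ≤ k ∧ a = Sum.inl (x, 0) ∧ b = Sum.inl (x, k)) ∨
      (∃ c i, i ≠ 0 ∧ a = Sum.inr (c, i) ∧ b = Sum.inr (c, 0)) ∨
      (∃ c j, a = Sum.inr (c, 0) ∧ b = litVertex (φ c j)) := by
  constructor
  · rintro (⟨x, (rfl | rfl), rfl⟩ | ⟨x, rfl, (rfl | rfl | rfl)⟩ | h |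
      ⟨c, x, j, rfl, (⟨hj, rfl⟩ | ⟨hj, rfl⟩)⟩)
    · exact Or.inl ⟨(x, true), rfl, rfl⟩
    · exact Or.inl ⟨(x, false), rfl, rfl⟩
    all_goals first
      | exact Or.inr (Or.inl ⟨x, _, by decide, rfl, rfl⟩)
      | exact Or.inr (Or.inr (Or.inl h))
      | exact Or.inr (Or.inr (Or.inr ⟨c, j, rfl, by simp [litVertex, hj]⟩))
  · rintro (⟨⟨x, _ | _⟩, rfl, rfl⟩ | ⟨x, k, hk, rfl, rfl⟩ | h | ⟨c, j, rfl, rfl⟩)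
    · exact Or.inl ⟨x, Or.inr rfl, rfl⟩
    · exact Or.inl ⟨x, Or.inl rfl, rfl⟩
    · obtain rfl | rfl | rfl : k = 3 ∨ k = 4 ∨ k = 5 := by omega
      all_goals exact Or.inr (Or.inl ⟨x, rfl, by simp⟩)
    · exact Or.inr (Or.inr (Or.inl h))
    · refine Or.inr (Or.inr (Or.inr ⟨c, (φ c j).1, j, rfl, ?_⟩))
      cases hs : (φ c j).2
      · exact Or.inr ⟨Prod.ext rfl hs, by simp [litVertex, hs]⟩
      · exact Or.inl ⟨Prod.ext rfl hs, by simp [litVertex, hs]⟩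

theorem clauseCentre_arc_iff {c : Fin m} {b : RedV n m} :
    (Sum.inr (c, 0), b) ∈ redArcs n m φ ↔ ∃ j, b = litVertex (φ c j) := by
  simp [mem_redArcs, redAdj_iff, litVertex]

theorem litVertex_arc_iff {ℓ : Fin n × Bool} {b : RedV n m} :
    (litVertex ℓ, b) ∈ redArcs n m φ ↔ b = Sum.inl (ℓ.1, 0) := by
  simp [mem_redArcs, redAdj_iff, litVertex, eq_ite_iff, ite_eq_iff]

theorem arc_varCentre_iff {x : Fin n} {a : RedV n m} :
    (a, Sum.inl (x, 0)) ∈ redArcs n m φ ↔ ∃ s, a = litVertex (x, s) := by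
  simp [mem_redArcs, redAdj_iff, litVertex, eq_ite_iff]

theorem arc_clauseCentre_iff {c : Fin m} {a : RedV n m} :
    (a, Sum.inr (c, 0)) ∈ redArcs n m φ ↔ ∃ i ≠ 0, a = Sum.inr (c, i) := by
  simp [mem_redArcs, redAdj_iff, litVertex]

theorem varCentre_arc_iff {x : Fin n} {b : RedV n m} :
    (Sum.inl (x, 0), b) ∈ redArcs n m φ ↔ ∃ k, 3 ≤ k ∧ b = Sum.inl (x, k) := by
  simp [mem_redArcs, redAdj_iff, litVertex]

theorem arc_varLeaf_iff {x : Fin n} {k : Fin 6} (hk : 3 ≤ k) {a : RedV n m} :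
    (a, Sum.inl (x, k)) ∈ redArcs n m φ ↔ a = Sum.inl (x, 0) := by
  obtain ⟨h₀, h₁, h₂⟩ : k ≠ 0 ∧ k ≠ 1 ∧ k ≠ 2 := by omega
  simp [mem_redArcs, redAdj_iff, litVertex, eq_ite_iff, h₀, h₁, h₂, hk]

theorem isDAG_redArcs : IsDAG (redArcs n m φ) := by
  refine isDAG_of_lt (Sum.elim (fun p => if p.2 = 0 then 3 else if p.2 ≤ 2 then 2 else 4)
    (fun p => if p.2 = 0 then 1 else 0)) ?_
  rintro ⟨a, b⟩ h
  rcases redAdj_iff.1 (mem_redArcs.1 h) with ⟨⟨x, _ | _⟩, rfl, rfl⟩ | ⟨x, k, hk, rfl, rfl⟩ |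
    ⟨c, i, hi, rfl, rfl⟩ | ⟨c, j, rfl, rfl⟩
  · simp [litVertex]
  · simp [litVertex]
  · obtain ⟨h₀, h₂⟩ : k ≠ 0 ∧ ¬ k ≤ 2 := by omega
    simp [h₀, h₂]
  · simp [hi]
  · cases hs : (φ c j).2 <;> simp [litVertex, hs]

theorem inDeg_clauseCentre (c : Fin m) : inDeg (redArcs n m φ) (Sum.inr (c, 0)) = 4 := by
  rw [inDeg_eq_card (s := ({i | i ≠ 0} : Finset (Fin 5)).image fun i => Sum.inr (c, i))
    fun u => by simp [arc_clauseCentre_iff, eq_comm],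
    card_image_of_injective _ fun i j h => by simpa using h]
  rfl

theorem outDeg_clauseCentre {c : Fin m} (hc : Function.Injective (φ c)) :
    outDeg (redArcs n m φ) (Sum.inr (c, 0)) = 3 := by
  rw [outDeg_eq_card (s := univ.image (litVertex ∘ φ c))
    fun w => by simp [clauseCentre_arc_iff, eq_comm],
    card_image_of_injective _ (litVertex_injective.comp hc)]
  rfl

theorem inDeg_varCentre (x : Fin n) : inDeg (redArcs n m φ) (Sum.inl (x, 0)) = 2 := by
  rw [inDeg_eq_card (s := univ.image fun s => litVertex (x, s))
    fun u => by simp [arc_varCentre_iff, or_comm],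
    card_image_of_injective _ fun s t h => by simpa using litVertex_injective h]
  rfl

theorem outDeg_varCentre (x : Fin n) : outDeg (redArcs n m φ) (Sum.inl (x, 0)) = 3 := by
  rw [outDeg_eq_card (s := ({k | 3 ≤ k} : Finset (Fin 6)).image fun k => Sum.inl (x, k))
    fun w => by simp [varCentre_arc_iff, eq_comm],
    card_image_of_injective _ fun k l h => by simpa using h]
  rfl

def gadgetCentre : Fin n ⊕ Fin m → RedV n m := Sum.map (·, 0) (·, 0)

theorem gadgetCentre_injective : Function.Injective (gadgetCentre : Fin n ⊕ Fin m → RedV n m) :=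
  Sum.map_injective.2 ⟨Prod.mk_left_injective 0, Prod.mk_left_injective 0⟩

theorem gadgetCentre_arc_notMem (i j : Fin n ⊕ Fin m) :
    (gadgetCentre i, gadgetCentre j) ∉ redArcs n m φ := by
  rcases i with x | c <;> rcases j with y | d <;>
    simp [gadgetCentre, mem_redArcs, redAdj_iff, litVertex, eq_ite_iff]

theorem deletions_at_centres (hφ : ∀ c, Function.Injective (φ c))
    {B : Finset (RedV n m × RedV n m)} (hB : B ⊆ redArcs n m φ) (hcard : #B ≤ 2 * m + n)
    (hF : IsFunnel (redArcs n m φ \ B)) :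
    (∀ x, inDeg B (Sum.inl (x, 0)) = 1 ∧ outDeg B (Sum.inl (x, 0)) = 0) ∧
      ∀ c, inDeg B (Sum.inr (c, 0)) = 0 ∧ outDeg B (Sum.inr (c, 0)) = 2 := by
  have hforkAt (v : RedV n m) (hv : 2 ≤ inDeg (redArcs n m φ \ B) v) :
      outDeg (redArcs n m φ \ B) v ≤ 1 :=
    hF.outDeg_le_one_of_reflTransGen (isDAG_redArcs.mono sdiff_subset) hv .refl
  have hvar (x : Fin n) : 1 ≤ inDeg B (Sum.inl (x, 0)) ∨ 2 ≤ outDeg B (Sum.inl (x, 0)) := by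
    have := hforkAt (Sum.inl (x, 0))
    rw [inDeg_sdiff hB, outDeg_sdiff hB, inDeg_varCentre, outDeg_varCentre] at this
    omega
  have hclause (c : Fin m) : 3 ≤ inDeg B (Sum.inr (c, 0)) ∨ 2 ≤ outDeg B (Sum.inr (c, 0)) := by
    have := hforkAt (Sum.inr (c, 0))
    rw [inDeg_sdiff hB, outDeg_sdiff hB, inDeg_clauseCentre, outDeg_clauseCentre (hφ c)] at this
    omega
  let need : Fin n ⊕ Fin m → ℕ := Sum.elim 1 2
  let deg (i : Fin n ⊕ Fin m) := inDeg B (gadgetCentre i) + outDeg B (gadgetCentre i)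
  have hneed : ∀ i ∈ univ, need i ≤ deg i := by
    rintro (x | c) -
    · show 1 ≤ inDeg B (Sum.inl (x, 0)) + outDeg B (Sum.inl (x, 0))
      have := hvar x
      omega
    · show 2 ≤ inDeg B (Sum.inr (c, 0)) + outDeg B (Sum.inr (c, 0))
      have := hclause c
      omega
  have htotal : ∑ i, deg i ≤ ∑ i, need i := calc
    ∑ i, deg i = ∑ v ∈ univ.image gadgetCentre, (inDeg B v + outDeg B v) :=
      (sum_image (f := fun v => inDeg B v + outDeg B v)
        fun i _ j _ h => gadgetCentre_injective h).symm
    _ ≤ #B := by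
      refine sum_inDeg_add_outDeg_le_card _ fun e he h₁ h₂ => ?_
      simp only [mem_image, mem_univ, true_and] at h₁ h₂
      obtain ⟨i, hi⟩ := h₁
      obtain ⟨j, hj⟩ := h₂
      exact gadgetCentre_arc_notMem (φ := φ) i j (hi ▸ hj ▸ hB he)
    _ ≤ 2 * m + n := hcard
    _ = ∑ i, need i := by simp [need, Fintype.sum_sum_type, add_comm, mul_comm]
  have htight := (sum_eq_sum_iff_of_le hneed).1 ((sum_le_sum hneed).antisymm htotal)
  refine ⟨fun x => ?_, fun c => ?_⟩
  · have : 1 = inDeg B (Sum.inl (x, 0)) + outDeg B (Sum.inl (x, 0)) := htight (.inl x) (mem_univ _)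
    have := hvar x
    omega
  · have : 2 = inDeg B (Sum.inr (c, 0)) + outDeg B (Sum.inr (c, 0)) := htight (.inr c) (mem_univ _)
    have := hclause c
    omega

theorem satisfiable_of_isFunnel_sdiff (hφ : ∀ c, Function.Injective (φ c))
    {B : Finset (RedV n m × RedV n m)} (hB : B ⊆ redArcs n m φ) (hcard : #B ≤ 2 * m + n)
    (hF : IsFunnel (redArcs n m φ \ B)) :
    ∃ σ : Fin n → Bool, ∀ c, ∃ j, σ (φ c j).1 = (φ c j).2 := by
  obtain ⟨hvar, hclause⟩ := deletions_at_centres hφ hB hcard hF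
  refine ⟨fun x => decide ((litVertex (x, true), Sum.inl (x, 0)) ∈ B), fun c => ?_⟩
  obtain ⟨u, hu⟩ : ∃ u, (Sum.inr (c, 0), u) ∈ redArcs n m φ \ B := by
    by_contra! h
    have := isSink_iff.2 h
    rw [IsSink, outDeg_sdiff hB, outDeg_clauseCentre (hφ c), (hclause c).2] at this
    omega
  obtain ⟨j, rfl⟩ := clauseCentre_arc_iff.1 (mem_sdiff.1 hu).1
  refine ⟨j, ?_⟩
  have hdel : (litVertex (φ c j), Sum.inl ((φ c j).1, 0)) ∈ B := by
    by_contra hkeep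
    have hreach : ReflTransGen (ArcAdj (redArcs n m φ \ B))
        (Sum.inr (c, 0)) (Sum.inl ((φ c j).1, 0)) :=
      .tail (.single hu) (mem_sdiff.2 ⟨litVertex_arc_iff.2 rfl, hkeep⟩)
    have := hF.outDeg_le_one_of_reflTransGen (isDAG_redArcs.mono sdiff_subset)
      (by rw [inDeg_sdiff hB, inDeg_clauseCentre, (hclause c).1]; norm_num) hreach
    rw [outDeg_sdiff hB, outDeg_varCentre, (hvar _).2] at this
    omega
  generalize φ c j = ℓ at hdel ⊢
  obtain ⟨x, _ | _⟩ := ℓ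
  · have : (litVertex (x, true), Sum.inl (x, 0)) ∉ B := fun h => by
      simpa [litVertex] using inDeg_le_one_iff.1 (hvar x).1.le _ _ h hdel
    simpa using this
  · simpa using hdel

section Witness

variable (φ) (σ : Fin n → Bool) (jc : Fin m → Fin 3)

def deletedArcs : Finset (RedV n m × RedV n m) :=
  univ.image (fun x => (litVertex (x, σ x), Sum.inl (x, 0))) ∪
    ({p | p.2 ≠ jc p.1} : Finset (Fin m × Fin 3)).image
      fun p => (Sum.inr (p.1, 0), litVertex (φ p.1 p.2))

variable {φ σ jc}

theorem mem_deletedArcs {e : RedV n m × RedV n m} :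
    e ∈ deletedArcs φ σ jc ↔ (∃ x, e = (litVertex (x, σ x), Sum.inl (x, 0))) ∨
      ∃ c j, j ≠ jc c ∧ e = (Sum.inr (c, 0), litVertex (φ c j)) := by
  simp [deletedArcs, eq_comm]

theorem deletedArcs_subset : deletedArcs φ σ jc ⊆ redArcs n m φ := by
  intro e he
  rcases mem_deletedArcs.1 he with ⟨x, rfl⟩ | ⟨c, j, -, rfl⟩
  · exact litVertex_arc_iff.2 rfl
  · exact clauseCentre_arc_iff.2 ⟨j, rfl⟩

theorem card_deletedArcs_le : #(deletedArcs φ σ jc) ≤ 2 * m + n := by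
  have hpairs : #({p | p.2 ≠ jc p.1} : Finset (Fin m × Fin 3)) = 2 * m := by
    rw [card_filter, Fintype.sum_prod_type]
    simp_rw [← card_filter, filter_ne', card_erase_of_mem (mem_univ _)]
    simp [mul_comm]
  calc #(deletedArcs φ σ jc) ≤ n + 2 * m :=
        (card_union_le _ _).trans (add_le_add (card_image_le.trans (by simp))
          (card_image_le.trans hpairs.le))
    _ = 2 * m + n := add_comm _ _

theorem eq_of_clauseCentre_arc {c : Fin m} {u : RedV n m}
    (h : (Sum.inr (c, 0), u) ∈ redArcs n m φ \ deletedArcs φ σ jc) :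
    u = litVertex (φ c (jc c)) := by
  obtain ⟨hA, hD⟩ := mem_sdiff.1 h
  obtain ⟨j, rfl⟩ := clauseCentre_arc_iff.1 hA
  by_cases hj : j = jc c
  · rw [hj]
  · exact absurd (mem_deletedArcs.2 (Or.inr ⟨c, j, hj, rfl⟩)) hD

theorem isSink_litVertex {ℓ : Fin n × Bool} (hℓ : σ ℓ.1 = ℓ.2) :
    IsSink (redArcs n m φ \ deletedArcs φ σ jc) (litVertex ℓ) := by
  refine isSink_iff.2 fun w h => ?_
  obtain ⟨hA, hD⟩ := mem_sdiff.1 h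
  obtain rfl := litVertex_arc_iff.1 hA
  exact hD (mem_deletedArcs.2 (Or.inl ⟨ℓ.1, by rw [hℓ]⟩))

theorem isSink_or_eq_clauseCentre (hjc : ∀ c, σ (φ c (jc c)).1 = (φ c (jc c)).2) {v : RedV n m}
    (hv : 2 ≤ inDeg (redArcs n m φ \ deletedArcs φ σ jc) v) :
    IsSink (redArcs n m φ \ deletedArcs φ σ jc) v ∨ ∃ c, v = Sum.inr (c, 0) := by
  obtain ⟨u₁, u₂, hne, h₁, h₂⟩ := one_lt_inDeg_iff.1 hv
  rcases redAdj_iff.1 (mem_redArcs.1 (mem_sdiff.1 h₁).1) with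
    ⟨⟨x, s₁⟩, rfl, rfl⟩ | ⟨x, k, hk, rfl, rfl⟩ | ⟨c, i, -, rfl, rfl⟩ | ⟨c, j, rfl, rfl⟩
  · obtain ⟨s₂, rfl⟩ := arc_varCentre_iff.1 (mem_sdiff.1 h₂).1
    have hs : s₁ ≠ s₂ := fun h => hne (h ▸ rfl)
    have hdel : (litVertex (x, σ x), Sum.inl (x, 0)) ∈ deletedArcs φ σ jc :=
      mem_deletedArcs.2 (Or.inl ⟨x, rfl⟩)
    obtain h | h : σ x = s₁ ∨ σ x = s₂ := by cases s₁ <;> cases s₂ <;> cases σ x <;> simp_all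
    · exact absurd (h ▸ hdel) (mem_sdiff.1 h₁).2
    · exact absurd (h ▸ hdel) (mem_sdiff.1 h₂).2
  · exact absurd ((arc_varLeaf_iff hk).1 (mem_sdiff.1 h₂).1) hne.symm
  · exact Or.inr ⟨c, rfl⟩
  · rw [eq_of_clauseCentre_arc h₁]
    exact Or.inl (isSink_litVertex (hjc c))

theorem isFunnel_sdiff_deletedArcs (hjc : ∀ c, σ (φ c (jc c)).1 = (φ c (jc c)).2) :
    IsFunnel (redArcs n m φ \ deletedArcs φ σ jc) := by
  refine isFunnel_of_forall_outDeg_le_one fun v w hv hvw => ?_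
  rcases isSink_or_eq_clauseCentre hjc hv with hsink | ⟨c, rfl⟩
  · rw [hsink.eq_of_reflTransGen hvw, hsink]
    exact zero_le_one
  rcases hvw.cases_head with rfl | ⟨u, hu, huw⟩
  · exact outDeg_le_one_iff.2 fun w₁ w₂ h₁ h₂ =>
      (eq_of_clauseCentre_arc h₁).trans (eq_of_clauseCentre_arc h₂).symm
  · have hsink := isSink_litVertex (φ := φ) (jc := jc) (hjc c)
    rw [← eq_of_clauseCentre_arc hu] at hsink
    rw [hsink.eq_of_reflTransGen huw, hsink]
    exact zero_le_one

end Witness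

end

/-- For a 3-CNF formula `φ` with `n` variables and `m` clauses,
each clause having three distinct literals, the reduction DAG `D(φ)` has
arc-deletion distance to a funnel at most `2m + n` iff `φ` is satisfiable. -/
theorem reduction_correct (n m : ℕ) (φ : Fin m → Fin 3 → Fin n × Bool)
    (hdistinct : ∀ c : Fin m, Function.Injective (φ c)) :
    funnelDist (redArcs n m φ) ≤ 2 * m + n ↔
      ∃ σ : Fin n → Bool, ∀ c : Fin m, ∃ j : Fin 3, σ (φ c j).1 = (φ c j).2 := by
  rw [funnelDist_le_iff]
  constructor
  · rintro ⟨B, hB, hcard, hF⟩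
    exact satisfiable_of_isFunnel_sdiff hdistinct hB hcard hF
  · rintro ⟨σ, hσ⟩
    choose jc hjc using hσ
    exact ⟨deletedArcs φ σ jc, deletedArcs_subset, card_deletedArcs_le,
      isFunnel_sdiff_deletedArcs hjc⟩
end

section
/- Let D be a DAG containing a vertex u with indegree at least 2 and a vertex w reachable from u by a directed path (possibly w = u) with outdegree at least 2. Then every source-sink path of D that passes through both u and w contains no private arc; in fact, every arc of such a path lies on at least two distinct source-sink paths of D. -/
variable {V : Type*} [Fintype V] [DecidableEq V]

/-! An arc of `p` lying before `w` survives on the source-sink path that follows `p` up to `w`,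
leaves it along an arc of `w` not on `p` and then runs on to a sink; an arc lying after `u`
survives on the path that comes from a source along an arc into `u` not on `p` and then follows
`p`. Acyclicity puts `u` no later than `w` on `p`, so every arc of `p` is of one of the two kinds,
and both detours differ from `p`. -/

open Relation

theorem List.IsChain.pairwise_transGen {α : Type*} {r : α → α → Prop} {l : List α}
    (h : l.IsChain r) : l.Pairwise (TransGen r) :=
  List.isChain_iff_pairwise.1 (h.imp fun _ _ => TransGen.single)

section

omit [Fintype V] [DecidableEq V]

theorem arcsOf_append_cons_s14 (l r : List V) (v : V) :
    arcsOf (l ++ v :: r) = arcsOf (l ++ [v]) ++ arcsOf (v :: r) := by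
  induction l with
  | nil => rfl
  | cons a l ih =>
    cases l with
    | nil => rfl
    | cons b l =>
      simp only [List.cons_append] at ih ⊢
      exact congrArg ((a, b) :: ·) ih

theorem arcsOf_subset_of_prefix {l₁ l₂ : List V} (h : l₁ <+: l₂) : arcsOf l₁ ⊆ arcsOf l₂ := by
  obtain ⟨t, rfl⟩ := h
  rcases List.eq_nil_or_concat l₁ with rfl | ⟨l, v, rfl⟩
  · simp [arcsOf]
  · rw [List.concat_eq_append, List.append_assoc, List.singleton_append, arcsOf_append_cons_s14 l t v]
    exact List.subset_append_left _ _

theorem arcsOf_subset_of_suffix {l₁ l₂ : List V} (h : l₁ <:+ l₂) : arcsOf l₁ ⊆ arcsOf l₂ := by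
  obtain ⟨t, rfl⟩ := h
  cases l₁ with
  | nil => simp [arcsOf]
  | cons v r =>
    rw [arcsOf_append_cons_s14]
    exact List.subset_append_right _ _

variable {A : Finset (V × V)}

theorem IsDAG.nodup_of_isChain (hdag : IsDAG A) {p : List V} (hp : p.IsChain (ArcAdj A)) :
    p.Nodup := by
  refine hp.pairwise_transGen.imp ?_
  rintro a _ h rfl
  exact hdag a h

theorem IsDAG.suffix_of_reflTransGen (hdag : IsDAG A) {p R S : List V} {u w : V}
    (hp : p.IsChain (ArcAdj A)) (huw : ReflTransGen (ArcAdj A) u w) (hw : w :: R <:+ p)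
    (hu : u :: S <:+ p) : w :: R <:+ u :: S := by
  rcases List.suffix_or_suffix_of_suffix hw hu with h | h
  · exact h
  rcases List.suffix_cons_iff.1 h with h | h
  · exact h ▸ List.suffix_refl _
  have hwu : TransGen (ArcAdj A) w u :=
    List.rel_of_pairwise_cons (hp.suffix hw).pairwise_transGen (h.subset List.mem_cons_self)
  exact (hdag u (TransGen.trans_right huw hwu)).elim

end

section

omit [Fintype V]

variable {A : Finset (V × V)}

theorem exists_arc_of_not_isSink {v : V} (h : ¬IsSink A v) : ∃ b, (v, b) ∈ A := by
  obtain ⟨⟨x, b⟩, hmem⟩ := Finset.card_ne_zero.1 h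
  rw [Finset.mem_filter] at hmem
  exact ⟨b, hmem.2 ▸ hmem.1⟩

theorem exists_arc_of_not_isSource {v : V} (h : ¬IsSource A v) : ∃ a, (a, v) ∈ A := by
  obtain ⟨⟨a, x⟩, hmem⟩ := Finset.card_ne_zero.1 h
  rw [Finset.mem_filter] at hmem
  exact ⟨a, hmem.2 ▸ hmem.1⟩

theorem exists_arc_ne_of_two_le_outDeg {v : V} (h : 2 ≤ outDeg A v) (d : V) :
    ∃ b, (v, b) ∈ A ∧ b ≠ d := by
  obtain ⟨⟨x, b⟩, hmem, hne⟩ := (Finset.one_lt_card_iff_nontrivial.1 h).exists_ne (v, d)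
  rw [Finset.mem_filter] at hmem
  obtain ⟨hb, rfl⟩ := hmem
  exact ⟨b, hb, fun hbd => hne (hbd ▸ rfl)⟩

theorem exists_arc_ne_of_two_le_inDeg {v : V} (h : 2 ≤ inDeg A v) (c : V) :
    ∃ a, (a, v) ∈ A ∧ a ≠ c := by
  obtain ⟨⟨a, x⟩, hmem, hne⟩ := (Finset.one_lt_card_iff_nontrivial.1 h).exists_ne (c, v)
  rw [Finset.mem_filter] at hmem
  obtain ⟨ha, rfl⟩ := hmem
  exact ⟨a, ha, fun hac => hne (hac ▸ rfl)⟩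

theorem not_isPrivate_of_ne {p p' : List V} {e : V × V} (hp : IsSourceSinkPath A p)
    (he : e ∈ arcsOf p) (hp' : IsSourceSinkPath A p') (he' : e ∈ arcsOf p') (hne : p' ≠ p) :
    ¬IsPrivate A e :=
  fun ⟨_, _, huniq⟩ => hne ((huniq p' ⟨hp', he'⟩).trans (huniq p ⟨hp, he⟩).symm)

end

section

omit [DecidableEq V]

variable {A : Finset (V × V)}

theorem IsDAG.wellFounded (hdag : IsDAG A) : WellFounded (ArcAdj A) := by
  have : IsTrans V (TransGen (ArcAdj A)) := ⟨fun _ _ _ => TransGen.trans⟩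
  have : Std.Irrefl (TransGen (ArcAdj A)) := ⟨hdag⟩
  exact Subrelation.wf TransGen.single (Finite.wellFounded_of_trans_of_irrefl _)

theorem IsDAG.wellFounded_flip (hdag : IsDAG A) : WellFounded (flip (ArcAdj A)) := by
  have : IsTrans V (flip (TransGen (ArcAdj A))) := ⟨fun _ _ _ h₁ h₂ => h₂.trans h₁⟩
  have : Std.Irrefl (flip (TransGen (ArcAdj A))) := ⟨hdag⟩
  exact Subrelation.wf (r := flip (TransGen (ArcAdj A))) (fun h => TransGen.single h)
    (Finite.wellFounded_of_trans_of_irrefl _)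

end

section

variable {A : Finset (V × V)}

theorem IsDAG.exists_isChain_cons_isSink (hdag : IsDAG A) (v : V) :
    ∃ q t, (v :: q).IsChain (ArcAdj A) ∧ (v :: q).getLast? = some t ∧ IsSink A t := by
  induction v using hdag.wellFounded_flip.induction with
  | _ v ih =>
    by_cases hv : IsSink A v
    · exact ⟨[], v, List.isChain_singleton v, rfl, hv⟩
    obtain ⟨b, hb⟩ := exists_arc_of_not_isSink hv
    obtain ⟨q, t, hq, hqt, ht⟩ := ih b hb
    exact ⟨b :: q, t, hq.cons_cons hb, by rwa [List.getLast?_cons_cons], ht⟩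

theorem IsDAG.exists_isChain_concat_isSource (hdag : IsDAG A) (v : V) :
    ∃ q s, (q ++ [v]).IsChain (ArcAdj A) ∧ (q ++ [v]).head? = some s ∧ IsSource A s := by
  induction v using hdag.wellFounded.induction with
  | _ v ih =>
    by_cases hv : IsSource A v
    · exact ⟨[], v, List.isChain_singleton v, rfl, hv⟩
    obtain ⟨a, ha⟩ := exists_arc_of_not_isSource hv
    obtain ⟨q, s, hq, hqs, hs⟩ := ih a ha
    refine ⟨q ++ [a], s, hq.append (List.isChain_singleton v) ?_, ?_, hs⟩
    · simpa [ArcAdj] using ha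
    · rwa [List.head?_append_of_ne_nil _ (by simp)]

theorem IsSourceSinkPath.exists_detour_after {L R : List V} {w b : V} (hdag : IsDAG A)
    (hp : IsSourceSinkPath A (L ++ w :: R)) (hb : (w, b) ∈ A) :
    ∃ q, IsSourceSinkPath A (L ++ w :: b :: q) := by
  obtain ⟨-, hc, -, ⟨s, hs, hsrc⟩, -⟩ := hp
  obtain ⟨q, t, hq, hqt, ht⟩ := hdag.exists_isChain_cons_isSink b
  have hc' : (L ++ w :: b :: q).IsChain (ArcAdj A) := by
    have hLw : (L ++ [w]).IsChain (ArcAdj A) :=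
      List.IsChain.left_of_append (l₂ := R) (by rw [List.append_assoc]; exact hc)
    simpa using hLw.append hq (by simpa [ArcAdj] using hb)
  refine ⟨q, by simp only [List.length_append, List.length_cons]; omega, hc',
    hdag.nodup_of_isChain hc', ⟨s, ?_, hsrc⟩, t, ?_, ht⟩
  · simpa [List.head?_append] using hs
  · rwa [List.getLast?_append_of_ne_nil _ (by simp), List.getLast?_cons_cons]

theorem IsSourceSinkPath.exists_detour_before {L S : List V} {u a : V} (hdag : IsDAG A)
    (hp : IsSourceSinkPath A (L ++ u :: S)) (ha : (a, u) ∈ A) :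
    ∃ q, IsSourceSinkPath A (q ++ a :: u :: S) := by
  obtain ⟨-, hc, -, -, ⟨t, ht, hsink⟩⟩ := hp
  obtain ⟨q, s, hq, hqs, hs⟩ := hdag.exists_isChain_concat_isSource a
  have hc' : (q ++ a :: u :: S).IsChain (ArcAdj A) := by
    simpa using hq.append (List.IsChain.right_of_append hc) (by simpa [ArcAdj] using ha)
  refine ⟨q, by simp only [List.length_append, List.length_cons]; omega, hc',
    hdag.nodup_of_isChain hc', ⟨s, ?_, hs⟩, t, ?_, hsink⟩
  · simpa [List.head?_append] using hqs
  · rwa [List.getLast?_append_of_ne_nil _ (by simp)] at ht ⊢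

theorem IsSourceSinkPath.exists_ne_of_mem_arcsOf_prefix {L R : List V} {w : V} {e : V × V}
    (hdag : IsDAG A) (hp : IsSourceSinkPath A (L ++ w :: R)) (hw : 2 ≤ outDeg A w)
    (he : e ∈ arcsOf (L ++ [w])) :
    ∃ p', p' ≠ L ++ w :: R ∧ IsSourceSinkPath A p' ∧ e ∈ arcsOf p' := by
  obtain ⟨b, hb, hbR⟩ := exists_arc_ne_of_two_le_outDeg hw (R.headD w)
  obtain ⟨q, hq⟩ := hp.exists_detour_after hdag hb
  refine ⟨_, fun h => ?_, hq, arcsOf_subset_of_prefix ⟨b :: q, by simp⟩ he⟩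
  cases List.append_cancel_left h
  exact hbR rfl

theorem IsSourceSinkPath.exists_ne_of_mem_arcsOf_suffix {L S : List V} {u : V} {e : V × V}
    (hdag : IsDAG A) (hp : IsSourceSinkPath A (L ++ u :: S)) (hu : 2 ≤ inDeg A u)
    (he : e ∈ arcsOf (u :: S)) :
    ∃ p', p' ≠ L ++ u :: S ∧ IsSourceSinkPath A p' ∧ e ∈ arcsOf p' := by
  obtain ⟨a, ha, haL⟩ := exists_arc_ne_of_two_le_inDeg hu (L.getLastD u)
  obtain ⟨q, hq⟩ := hp.exists_detour_before hdag ha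
  refine ⟨_, fun h => ?_, hq, arcsOf_subset_of_suffix ⟨q ++ [a], by simp⟩ he⟩
  rw [← List.append_cancel_right (by simpa using h : q ++ [a] ++ u :: S = L ++ u :: S)] at haL
  exact haL List.getLastD_concat.symm

end

/-- If a DAG has a vertex `u` of indegree ≥ 2 and a vertex `w`
reachable from `u` (possibly `w = u`) of outdegree ≥ 2, then every source-sink
path through both `u` and `w` contains no private arc; indeed each of its arcs
lies on at least two distinct source-sink paths. -/
theorem path_through_forbidden_pair_all_arcs_shared (A : Finset (V × V))
    (hdag : IsDAG A) (u w : V) (hu : 2 ≤ inDeg A u)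
    (hreach : Relation.ReflTransGen (ArcAdj A) u w) (hw : 2 ≤ outDeg A w)
    (p : List V) (hp : IsSourceSinkPath A p) (hup : u ∈ p) (hwp : w ∈ p) :
    ∀ e ∈ arcsOf p, ¬ IsPrivate A e ∧
      ∃ p₁ p₂ : List V, p₁ ≠ p₂ ∧
        (IsSourceSinkPath A p₁ ∧ e ∈ arcsOf p₁) ∧
        (IsSourceSinkPath A p₂ ∧ e ∈ arcsOf p₂) := by
  obtain ⟨L, R, rfl⟩ := List.append_of_mem hwp
  obtain ⟨L', S, hS⟩ := List.append_of_mem hup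
  have hsuf : w :: R <:+ u :: S := hdag.suffix_of_reflTransGen hp.2.1 hreach
    (List.suffix_append L _) (hS ▸ List.suffix_append L' _)
  intro e he
  obtain ⟨p', hne, hp', he'⟩ :
      ∃ p', p' ≠ L ++ w :: R ∧ IsSourceSinkPath A p' ∧ e ∈ arcsOf p' := by
    rcases List.mem_append.1 (arcsOf_append_cons_s14 L R w ▸ he) with hbefore | hafter
    · exact hp.exists_ne_of_mem_arcsOf_prefix hdag hw hbefore
    · rw [hS] at hp ⊢
      exact hp.exists_ne_of_mem_arcsOf_suffix hdag hu (arcsOf_subset_of_suffix hsuf hafter)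
  exact ⟨not_isPrivate_of_ne hp he hp' he' hne, p', _, hne, ⟨hp', he'⟩, hp, he⟩
end
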